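/- Let m ≥ 1 and (γ,w) be an (n,mn)-parking function such that every factor of γ of the form N E^p N satisfies p ≤ m. Then the reading word of (γ,w) equals the reverse of w, i.e., read(γ,w) = w^{-1} = w_n w_{n-1} ... w_1. -/

import Mathlib

open scoped Classical

inductive Step : Type
  | N | E | D
deriving DecidableEq, Repr

instance : Fintype Step :=
  ⟨{Step.N, Step.E, Step.D}, by intro x; cases x <;> simp⟩

open Step

/-- number of occurrences of the letter `s` in the word `w` -/
def cnt (s : Step) (w : List Step) : ℕ := w.count s

/-- Schröder (or Dyck, if no `D`s) path in an `n × n` grid: every prefix has at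
least as many `N`s as `E`s, and the totals agree. -/
def IsSchroeder (w : List Step) : Prop :=
  (∀ p : List Step, p <+: w → cnt E p ≤ cnt N p) ∧ cnt N w = cnt E w

/-- words that are concatenations of blocks `NE` and `D` -/
inductive IsNED : List Step → Prop
  | nil : IsNED []
  | ne {w} : IsNED w → IsNED (N :: E :: w)
  | d {w} : IsNED w → IsNED (D :: w)

/-- area of a Schröder path: the number of lower triangles between the path and the
main diagonal, computed as the sum over `N` and `D` steps of the height
`#N - #E` of the starting point of the step above the diagonal. -/
def areaAux : ℕ → List Step → ℕ
  | _, [] => 0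
  | h, N :: w => h + areaAux (h+1) w
  | h, D :: w => h + areaAux h w
  | h, E :: w => areaAux (h-1) w

def area (w : List Step) : ℕ := areaAux 0 w

/-- area of an `N/E` lattice path in a rectangular grid: the number of boxes under
the path, i.e. the sum over `E` steps of the number of `N` steps before it. -/
def areaNEAux : ℕ → List Step → ℕ
  | _, [] => 0
  | h, N :: w => areaNEAux (h+1) w
  | h, E :: w => h + areaNEAux h w
  | h, D :: w => areaNEAux h w

def areaNE (w : List Step) : ℕ := areaNEAux 0 w

/-- number of `N`s occurring before the `(j+1)`-st `E` (`j` is 0-indexed);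
this is the height of the path above the horizontal interval `[j, j+1]`. -/
def nBefore : List Step → ℕ → ℕ
  | [], _ => 0
  | N :: w, j => 1 + nBefore w j
  | E :: w, j => if j = 0 then 0 else nBefore w (j-1)
  | D :: w, j => nBefore w j

/-- number of `E`s occurring before the `(i+1)`-st `N` (`i` is 0-indexed). -/
def eBefore : List Step → ℕ → ℕ
  | [], _ => 0
  | E :: w, i => 1 + eBefore w i
  | N :: w, i => if i = 0 then 0 else eBefore w (i-1)
  | D :: w, i => eBefore w i

/-- number of `D`s occurring after the `e`-th `E` (`e` is 1-indexed). -/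
def dAfterE : List Step → ℕ → ℕ
  | [], _ => 0
  | E :: w, e => if e ≤ 1 then cnt D w else dAfterE w (e-1)
  | D :: w, e => dAfterE w e
  | N :: w, e => dAfterE w e

/-- Combined computation of `bounce(Γ(γ)) + numph(γ)` along the bounce path of
`Γ(γ)`.  Here `g` is the Schröder path, `w = Γ(g)` is the underlying Dyck path,
`nn` its size; the bounce path has corners (peaks) at the positions
`j₀ = 0, jₖ₊₁ = nBefore w jₖ`; each intermediate return `jₖ₊₁ < nn` contributes
`nn - jₖ₊₁` to the bounce of `Γ(g)`, and the peak with corner at `jₖ` is the start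
of the `(jₖ+1)`-st east step, contributing to numph the number of diagonal steps of
`g` above it, i.e. after that east step. -/
def bounceAux (g w : List Step) (nn : ℕ) : ℕ → ℕ → ℕ
  | 0, _ => 0
  | fuel+1, j =>
      dAfterE g (j+1) +
        (if nn ≤ nBefore w j ∨ nBefore w j ≤ j then 0
         else (nn - nBefore w j) + bounceAux g w nn fuel (nBefore w j))

/-- the bounce statistic of a Schröder path: `bounce(Γ(γ)) + numph(γ)` -/
def bounce (g : List Step) : ℕ :=
  let w := g.filter (fun s => s ≠ D)
  let nn := cnt E w
  if nn = 0 then 0 else bounceAux g w nn g.length 0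

/-- the (signed) area coordinate `a_i = m·i - (#E before the (i+1)-st N)` of line `i`
(0-indexed) for a path in an `n × mn` grid. -/
def aLine (m : ℕ) (g : List Step) (i : ℕ) : ℤ := (m : ℤ) * i - eBefore g i

/-- an `(n, mn)`-Dyck path: `n` north steps, `mn` east steps, no diagonal steps,
staying weakly above the main diagonal. -/
def IsParkingPath (n m : ℕ) (g : List Step) : Prop :=
  (∀ s ∈ g, s ≠ D) ∧ cnt N g = n ∧ cnt E g = m * n ∧
    ∀ p : List Step, p <+: g → cnt E p ≤ m * cnt N p

/-- an `(n, mn)`-parking function: an `(n,mn)`-Dyck path labelled by a permutation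
`w` of `{0, …, n-1}` whose labels increase within each column. -/
def IsParking (n m : ℕ) (g : List Step) (w : Fin n → Fin n) : Prop :=
  IsParkingPath n m g ∧ Function.Bijective w ∧
    ∀ i j : Fin n, (j : ℕ) = (i : ℕ) + 1 → eBefore g (i : ℕ) = eBefore g (j : ℕ) → w i < w j

/-- the diagonal inversion statistic of an `(n, mn)`-parking function -/
def dinv (n m : ℕ) (g : List Step) (w : Fin n → Fin n) : ℤ :=
  ∑ i : Fin n, ∑ j : Fin n,
    if (i : ℕ) < (j : ℕ) then
      (if w i < w j then max 0 ((m : ℤ) - |aLine m g (i : ℕ) - aLine m g (j : ℕ)|) else 0) +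
        (if w j < w i then max 0 ((m : ℤ) - |aLine m g (j : ℕ) - aLine m g (i : ℕ) + 1|) else 0)
    else 0

/-- the number of descents of the word `w` -/
def desNum (n : ℕ) (w : Fin n → Fin n) : ℕ :=
  ((Finset.range (n-1)).filter fun i =>
    ∃ hj : i + 1 < n, w ⟨i+1, hj⟩ < w ⟨i, Nat.lt_of_succ_lt hj⟩).card

/-- the major index of the word `w` (with positions 1-indexed as usual) -/
def majStat (n : ℕ) (w : Fin n → Fin n) : ℕ :=
  ∑ i ∈ (Finset.range (n-1)).filter (fun i =>
    ∃ hj : i + 1 < n, w ⟨i+1, hj⟩ < w ⟨i, Nat.lt_of_succ_lt hj⟩), (i+1)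

/-- the reading word of a labelled path in an `n × mn` grid: labels are read along
diagonals parallel to the main diagonal, starting with the farthest diagonal,
each diagonal being read from top-right to bottom-left. -/
def readWord (n m : ℕ) (g : List Step) (lab : ℕ → ℕ) : List ℕ :=
  ((List.range (m * n + 1)).map fun k =>
    (((List.range n).reverse.filter fun i => aLine m g i = (m * n : ℤ) - k).map lab)).flatten

/-- the labelling function `ℕ → ℕ` associated to a permutation of `Fin n` -/
def labOf {n : ℕ} (w : Fin n → Fin n) : ℕ → ℕ :=
  fun i => if h : i < n then (w ⟨i, h⟩ : ℕ) else 0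

/-- one step of the algorithm `φ`, on the reversed word: find the rightmost
(i.e. first in the reversed word) east step not followed by an east step,
and swap it with the letter following it. -/
def phiRevAux : List Step → List Step
  | a :: E :: t => if a ≠ E then E :: a :: t else a :: phiRevAux (E :: t)
  | a :: t => a :: phiRevAux t
  | [] => []

/-- one step of the algorithm `φ` -/
def phiStep (w : List Step) : List Step := (phiRevAux w.reverse).reverse

/-- the sequence `φ(γ) = (γ₀, γ₁, …, γ_{bounce γ})` produced by the algorithm -/
def phiSeq (g : List Step) : List (List Step) :=
  (List.range (bounce g + 1)).map fun i => phiStep^[i] g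

/-- the union of all sequences `φ(γ)` over area-0 Schröder paths with `n` blocks -/
def phiUniv (n : ℕ) : Set (List Step) :=
  {p | ∃ g, IsNED g ∧ cnt N g + cnt D g = n ∧ p ∈ phiSeq g}

/-- the map replacing each block `NE` by `N` and each `D` by `E` -/
def theta : List Step → List Step
  | N :: E :: w => N :: theta w
  | D :: w => E :: theta w
  | _ :: w => theta w
  | [] => []

/-- the cells of the hook-shaped Young diagram `(d, 1^{n-d})` (row 0 is the arm). -/
def hookCells (n d : ℕ) : Finset (ℕ × ℕ) :=
  ((Finset.range d).image fun c => ((0 : ℕ), c)) ∪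
    ((Finset.range (n - d + 1)).image fun r => (r, (0 : ℕ)))

/-- a standard Young tableau of hook shape `(d, 1^{n-d})`: `pos i` is the cell
`(row, column)` containing the entry `i+1`; entries increase along rows and columns. -/
structure HookSYT (n d : ℕ) where
  pos : Fin n → ℕ × ℕ
  mem : ∀ i, pos i ∈ hookCells n d
  inj : Function.Injective pos
  rowInc : ∀ i j : Fin n, (pos i).1 = (pos j).1 → (pos i).2 < (pos j).2 → i < j
  colInc : ∀ i j : Fin n, (pos i).2 = (pos j).2 → (pos i).1 < (pos j).1 → i < j

/-- the descent set of a standard Young tableau: entries `i ∈ {1, …, n-1}` such that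
the entry `i+1` lies in a strictly higher row than `i`. -/
def Des {n d : ℕ} (τ : HookSYT n d) : Finset ℕ :=
  (Finset.Icc 1 (n-1)).filter fun i =>
    ∃ hi : i < n, ∃ hi' : i - 1 < n, (τ.pos ⟨i - 1, hi'⟩).1 < (τ.pos ⟨i, hi⟩).1

/-- the major index of a standard Young tableau -/
def majT {n d : ℕ} (τ : HookSYT n d) : ℕ := ∑ i ∈ Des τ, i

/-- the number of descents of a standard Young tableau -/
def desT {n d : ℕ} (τ : HookSYT n d) : ℕ := (Des τ).card

/-- the maximum of the descent set -/
def maxDes {n d : ℕ} (τ : HookSYT n d) : ℕ := (Des τ).sup id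

/-- the map `M_{n,d}`: the path `γ₁γ₂⋯γₙ` with `γₙ = NE`, `γ_{n-i} = NE` if
`i ∈ Des τ` and `γ_{n-i} = D` otherwise -/
def Mmap (n d : ℕ) (τ : HookSYT n d) : List Step :=
  (((List.range n).map fun j =>
    if j = n - 1 then [N, E]
    else if (n - 1 - j) ∈ Des τ then [N, E] else [D])).flatten

/-- the map `S_{n,d}`: the path `γ₁⋯γ_{n-1}` with `γ_{n-i} = NNEE` if
`i = max Des τ` and `1 ∈ Des τ`, `γ_{n-i} = NDE` if `i = max Des τ` and
`1 ∉ Des τ`, `γ_{n-i} = NE` if `i = 1` or `i ∈ Des τ ∖ {max Des τ}`, and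
`γ_{n-i} = D` otherwise. -/
def Smap (n d : ℕ) (τ : HookSYT n d) : List Step :=
  (((List.range (n-1)).map fun j =>
    if (n - 1 - j) = maxDes τ then (if 1 ∈ Des τ then [N,N,E,E] else [N,D,E])
    else if (n - 1 - j) = 1 ∨ (n - 1 - j) ∈ Des τ then [N,E] else [D])).flatten

/-- the set `V_{n,d}` of Schröder paths of the form `Dʲ NNEE u` or `Dʲ NDE u`
with `u ∈ {NE,D}* NE`, having `n-d+1` north steps and `d-1` diagonal steps. -/
def Vset (n d : ℕ) : Set (List Step) :=
  {g | (∃ j u, IsNED u ∧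
      (g = List.replicate j D ++ [N,N,E,E] ++ (u ++ [N,E]) ∨
       g = List.replicate j D ++ [N,D,E] ++ (u ++ [N,E]))) ∧
     cnt N g = n - d + 1 ∧ cnt D g = d - 1}

/-- Schröder paths in an `n × n` grid with `dd` diagonal steps, area `a`,
ending with `NE` -/
def SchT (n dd a : ℕ) : Set (List Step) :=
  {g | IsSchroeder g ∧ cnt D g = dd ∧ cnt N g = n - dd ∧ area g = a ∧ ∃ u, g = u ++ [N, E]}

/-- the 'upper' forms: `Dʲ NNEE γ' NE NE` or `γ' NE Dʲ NNEE γ''` -/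
def UpperForm (g : List Step) : Prop :=
  (∃ j u, IsNED u ∧ g = List.replicate j D ++ [N,N,E,E] ++ u ++ [N,E,N,E]) ∨
  (∃ u j v, IsNED u ∧ g = u ++ [N,E] ++ List.replicate j D ++ [N,N,E,E] ++ v)

/-- the 'lower' forms: `Dʲ NNEE γ' D NE` or `γ' NDE Dʲ NE γ''` -/
def LowerForm (g : List Step) : Prop :=
  (∃ j u, IsNED u ∧ g = List.replicate j D ++ [N,N,E,E] ++ u ++ [D,N,E]) ∨
  (∃ u j v, IsNED u ∧ g = u ++ [N,D,E] ++ List.replicate j D ++ [N,E] ++ v)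

/-- the number of distinct columns of the path -/
def Tcols (n : ℕ) (g : List Step) : ℕ :=
  ((Finset.range n).image fun i => eBefore g i).card

/-- the `q`-integer `[k]_q = 1 + q + ⋯ + q^{k-1}` as a polynomial -/
noncomputable def qInt (k : ℕ) : Polynomial ℤ := ∑ i ∈ Finset.range k, Polynomial.X ^ i

/-- the `q`-factorial `[k]!_q` -/
noncomputable def qFact (k : ℕ) : Polynomial ℤ := ∏ i ∈ Finset.range k, qInt (i+1)

/-! The reading word lists the rows by decreasing area `aLine m g i`, breaking ties by
decreasing row index. The Dyck condition makes every area nonnegative, and a factor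
`N E^p N` with `p ≤ m` means the area cannot drop from one row to the next; so the areas
increase weakly with the row index and reading by decreasing area reads the rows from top
to bottom. -/

namespace List

variable {α : Type*}

theorem filter_append_filter_not_of_pairwise (p : α → Bool) {l : List α}
    (hl : l.Pairwise fun a b => p b → p a) : l.filter p ++ l.filter (fun a => !p a) = l := by
  induction l with
  | nil => rfl
  | cons a t ih =>
    obtain ⟨ha, ht⟩ := pairwise_cons.mp hl
    cases hpa : p a
    · have hnot : ∀ b ∈ t, ¬p b := fun b hb hpb => by simpa [hpa] using ha b hb hpb
      have hpos : t.filter p = [] := filter_eq_nil_iff.mpr hnot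
      have hneg : t.filter (fun a => !p a) = t := filter_eq_self.mpr (by simpa using hnot)
      simp [hpa, hpos, hneg]
    · simp [hpa, ih ht]

theorem flatten_map_filter_key_eq_self {β : Type*} [LinearOrder β] (key : α → β) :
    ∀ (ds : List β) {l : List α}, ds.Pairwise (· > ·) →
      l.Pairwise (fun a b => key b ≤ key a) → (∀ a ∈ l, key a ∈ ds) →
      (ds.map fun d => l.filter fun a => key a = d).flatten = l
  | [], l, _, _, hkey => by
    cases l with
    | nil => rfl
    | cons a _ => exact absurd (hkey a mem_cons_self) not_mem_nil
  | d :: ds, l, hds, hl, hkey => by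
    obtain ⟨hd, hds⟩ := pairwise_cons.mp hds
    have hle : ∀ a ∈ l, key a ≤ d := fun a ha => by
      rcases mem_cons.mp (hkey a ha) with h | h
      · exact h.le
      · exact (hd _ h).le
    have hrest : (ds.map fun d' => l.filter fun a => key a = d') =
        ds.map fun d' => (l.filter fun a => key a ≠ d).filter fun a => key a = d' := by
      refine map_congr_left fun d' hd' => ?_
      rw [filter_filter]
      refine filter_congr fun a _ => ?_
      have := (hd d' hd').ne
      by_cases h : key a = d' <;> simp [h, this]
    rw [map_cons, flatten_cons, hrest, flatten_map_filter_key_eq_self key ds hds (hl.filter _)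
      (fun a ha => by
        obtain ⟨ha, hne⟩ := mem_filter.mp ha
        exact (mem_cons.mp (hkey a ha)).resolve_left (by simpa using hne))]
    simpa using filter_append_filter_not_of_pairwise (fun a => decide (key a = d))
      (hl.imp_of_mem fun {a b} ha _ hab hb => by
        simpa using le_antisymm (hle a ha) ((of_decide_eq_true hb).symm.le.trans hab))

end List

theorem exists_prefix_cnt_E_eq_eBefore (g : List Step) (i : ℕ) :
    ∃ u, u <+: g ∧ cnt E u = eBefore g i ∧ cnt N u ≤ i := by
  induction g generalizing i with
  | nil => exact ⟨[], List.prefix_rfl, rfl, by simp [cnt]⟩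
  | cons a t ih =>
    cases a with
    | E =>
      obtain ⟨u, hu, hE, hN⟩ := ih i
      refine ⟨E :: u, List.cons_prefix_cons.mpr ⟨rfl, hu⟩, ?_, by simpa [cnt] using hN⟩
      simp [cnt, eBefore, ← hE, add_comm]
    | D =>
      obtain ⟨u, hu, hE, hN⟩ := ih i
      exact ⟨D :: u, List.cons_prefix_cons.mpr ⟨rfl, hu⟩, by simpa [cnt, eBefore] using hE,
        by simpa [cnt] using hN⟩
    | N =>
      cases i with
      | zero => exact ⟨[], List.nil_prefix, rfl, le_rfl⟩
      | succ j =>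
        obtain ⟨u, hu, hE, hN⟩ := ih j
        exact ⟨N :: u, List.cons_prefix_cons.mpr ⟨rfl, hu⟩, by simpa [cnt, eBefore] using hE,
          by simpa [cnt] using hN⟩

theorem eBefore_le_mul {m : ℕ} {g : List Step}
    (hprefix : ∀ p : List Step, p <+: g → cnt E p ≤ m * cnt N p) (i : ℕ) :
    eBefore g i ≤ m * i := by
  obtain ⟨u, hu, hE, hN⟩ := exists_prefix_cnt_E_eq_eBefore g i
  calc eBefore g i = cnt E u := hE.symm
    _ ≤ m * cnt N u := hprefix u hu
    _ ≤ m * i := Nat.mul_le_mul_left m hN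

theorem aLine_nonneg {m : ℕ} {g : List Step}
    (hprefix : ∀ p : List Step, p <+: g → cnt E p ≤ m * cnt N p) (i : ℕ) :
    0 ≤ aLine m g i := by
  have := eBefore_le_mul hprefix i
  unfold aLine
  omega

theorem exists_eq_replicate_E_append_N {g : List Step} (hD : ∀ s ∈ g, s ≠ D) (hN : N ∈ g) :
    ∃ p v, g = List.replicate p E ++ N :: v ∧ eBefore g 0 = p := by
  induction g with
  | nil => simp at hN
  | cons a t ih =>
    cases a with
    | N => exact ⟨0, t, rfl, rfl⟩
    | D => exact absurd rfl (hD D List.mem_cons_self)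
    | E =>
      obtain ⟨p, v, rfl, hp⟩ :=
        ih (fun s hs => hD s (List.mem_cons_of_mem _ hs)) (by simpa using hN)
      exact ⟨p + 1, v, rfl, by simp [eBefore, hp, add_comm]⟩

theorem exists_eq_append_N_replicate_E_N {g : List Step} (hD : ∀ s ∈ g, s ≠ D) {i : ℕ}
    (hi : i + 1 < cnt N g) : ∃ u p v, g = u ++ N :: (List.replicate p E ++ N :: v) ∧
      eBefore g (i + 1) = eBefore g i + p := by
  induction g generalizing i with
  | nil => simp [cnt] at hi
  | cons a t ih =>
    have hDt : ∀ s ∈ t, s ≠ D := fun s hs => hD s (List.mem_cons_of_mem _ hs)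
    cases a with
    | D => exact absurd rfl (hD D List.mem_cons_self)
    | E =>
      obtain ⟨u, p, v, rfl, hp⟩ := ih hDt (by simpa [cnt] using hi)
      exact ⟨E :: u, p, v, rfl, by simp only [eBefore, hp]; omega⟩
    | N =>
      cases i with
      | zero =>
        have hNt : N ∈ t := by simpa [cnt] using hi
        obtain ⟨p, v, rfl, hp⟩ := exists_eq_replicate_E_append_N hDt hNt
        exact ⟨[], p, v, rfl, by simp [eBefore, hp]⟩
      | succ j =>
        obtain ⟨u, p, v, rfl, hp⟩ := ih hDt (by simp [cnt] at hi ⊢; omega)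
        exact ⟨N :: u, p, v, rfl, by simpa [eBefore] using hp⟩

theorem aLine_monotoneOn {m : ℕ} {g : List Step} (hD : ∀ s ∈ g, s ≠ D)
    (hfac : ∀ (p : ℕ) (u v : List Step),
      g = u ++ N :: (List.replicate p E ++ N :: v) → p ≤ m) :
    MonotoneOn (aLine m g) (Set.Iio (cnt N g)) := by
  refine monotoneOn_of_le_succ Set.ordConnected_Iio fun i _ _ hi => ?_
  obtain ⟨u, p, v, hg, hstep⟩ :=
    exists_eq_append_N_replicate_E_N hD (i := i) (by simpa using hi)
  have hp := hfac p u v hg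
  simp only [Order.succ_eq_add_one, aLine, hstep]
  push_cast
  linarith

theorem readWord_eq_reverse_of_monotoneOn {n m : ℕ} {g : List Step} (lab : ℕ → ℕ)
    (hnonneg : ∀ i < n, 0 ≤ aLine m g i) (hmono : MonotoneOn (aLine m g) (Set.Iio n)) :
    readWord n m g lab = (List.range n).reverse.map lab := by
  set ds := (List.range (m * n + 1)).map fun k : ℕ => (m * n : ℤ) - k
  have hds : ds.Pairwise (· > ·) :=
    List.pairwise_map.mpr (List.pairwise_lt_range.imp fun h => by simpa using h)
  have hsorted : (List.range n).reverse.Pairwise fun i j => aLine m g j ≤ aLine m g i :=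
    List.pairwise_reverse.mpr <| List.pairwise_lt_range.imp_of_mem fun hi hj hij =>
      hmono (by simpa using hi) (by simpa using hj) hij.le
  have hkey : ∀ i ∈ (List.range n).reverse, aLine m g i ∈ ds := fun i hi => by
    have hin : i < n := by simpa using hi
    have hlower := hnonneg i hin
    have hupper : aLine m g i ≤ m * n := by
      unfold aLine
      have : (m : ℤ) * i ≤ m * n := by gcongr
      omega
    refine List.mem_map.mpr ⟨(m * n - aLine m g i).toNat, ?_, by omega⟩
    simp only [List.mem_range]
    omega
  calc readWord n m g lab
      = (ds.map fun d => (List.range n).reverse.filter fun i => aLine m g i = d).flatten.map lab :=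
        by simp [readWord, ds, List.map_flatten, List.map_map, Function.comp_def,
          ← List.map_eq_flatMap]
    _ = (List.range n).reverse.map lab := by
        rw [List.flatten_map_filter_key_eq_self _ ds hds hsorted hkey]

theorem stmt9_general (n m : ℕ) (g : List Step) (w : Fin n → Fin n)
    (hpark : IsParking n m g w)
    (hfac : ∀ (p : ℕ) (u v : List Step),
      g = u ++ Step.N :: (List.replicate p Step.E ++ Step.N :: v) → p ≤ m) :
    readWord n m g (labOf w) = (List.range n).reverse.map (labOf w) := by
  obtain ⟨⟨hD, hN, -, hprefix⟩, -, -⟩ := hpark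
  refine readWord_eq_reverse_of_monotoneOn _ (fun i _ => aLine_nonneg hprefix i) ?_
  simpa [hN] using aLine_monotoneOn hD hfac

/-- If every factor `N E^p N` of the Dyck path of an `(n,mn)`-parking
function satisfies `p ≤ m`, then the reading word equals the reverse of `w`:
`read(γ,w) = w_n w_{n-1} ⋯ w_1`. -/
theorem stmt9 (n m : ℕ) (hm : 1 ≤ m) (g : List Step) (w : Fin n → Fin n)
    (hpark : IsParking n m g w)
    (hfac : ∀ (p : ℕ) (u v : List Step),
      g = u ++ Step.N :: (List.replicate p Step.E ++ Step.N :: v) → p ≤ m) :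
    readWord n m g (labOf w) = (List.range n).reverse.map (labOf w) :=
  stmt9_general n m g w hpark hfac
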